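/- arXiv:2601.17603 — 2 statements merged into one kernel-verified Lean document; each statement's English description precedes it below -/
import Mathlib

section
/- For every oscillating tableau O of shape λ and length n, the map com : SSOT(O) → (weak compositions), sending an SSOT S to the weight vector of its profile, is injective, and it is weight-preserving in the sense that x^{com(S)} = x^S for every S ∈ SSOT(O). -/
open scoped BigOperators Classical

noncomputable section

/-! ### Boxes and strips -/

/-- `boxNE B B'` : the box `B'` lies weakly north and strictly east of the box `B`
(boxes are `(row, column)` pairs). -/
def boxNE (B B' : ℕ × ℕ) : Prop := B'.1 ≤ B.1 ∧ B.2 < B'.2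

/-- `HStrip μ ν` : `μ ⊆ ν` and the skew shape `ν \ μ` is a horizontal strip, i.e. it has
at most one box in every column. -/
def HStrip (μ ν : YoungDiagram) : Prop :=
  μ ≤ ν ∧ ∀ i₁ i₂ j : ℕ, (i₁, j) ∈ ν → (i₁, j) ∉ μ → (i₂, j) ∈ ν → (i₂, j) ∉ μ → i₁ = i₂

/-- `VStrip μ ν` : `μ ⊆ ν` and the skew shape `ν \ μ` is a vertical strip, i.e. it has
at most one box in every row. -/
def VStrip (μ ν : YoungDiagram) : Prop :=
  μ ≤ ν ∧ ∀ i j₁ j₂ : ℕ, (i, j₁) ∈ ν → (i, j₁) ∉ μ → (i, j₂) ∈ ν → (i, j₂) ∉ μ → j₁ = j₂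

/-- `ν` is obtained from `μ` by adding exactly one box. -/
def YCovers (μ ν : YoungDiagram) : Prop := μ ≤ ν ∧ ν.card = μ.card + 1

/-! ### Semistandard oscillating tableaux (SSOT)

An SSOT `S = (S^1, S'^2, S^2, …, S'^k, S^k)` is encoded by the number of steps `k`,
the partitions `A i = S^i` and `D i = S'^i` (with the conventions `A 0 = D 0 = D 1 = ∅`
and `A i = D (i+1) = S^k` for `i ≥ k`, i.e. the sequence is continued by the final
shape forever, and the last step is required to be nontrivial so that the number of
steps is well defined). -/

structure SSOT where
  steps : ℕ
  A : ℕ → YoungDiagram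
  D : ℕ → YoungDiagram
  hA0 : A 0 = ⊥
  hD0 : D 0 = ⊥
  hD1 : D 1 = ⊥
  stableA : ∀ i, steps ≤ i → A i = A steps
  stableD : ∀ i, steps < i → D i = A steps
  strip_del : ∀ i, 1 ≤ i → HStrip (D (i + 1)) (A i)
  strip_add : ∀ i, 2 ≤ i → HStrip (D i) (A i)
  minimal : steps ≠ 0 → ¬(D steps = A steps ∧ A steps = A (steps - 1))

namespace SSOT

/-- The shape of an SSOT. -/
def shape (S : SSOT) : YoungDiagram := S.A S.steps

/-- The multiplicity of the letter `i` in the content `‖S‖`, namely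
`|S^{i-1} \ S'^i| + |S^i \ S'^i|`. -/
def mult (S : SSOT) (i : ℕ) : ℕ :=
  if i = 0 then 0 else ((S.A (i - 1)).card - (S.D i).card) + ((S.A i).card - (S.D i).card)

/-- The length of an SSOT. -/
def length (S : SSOT) : ℕ := ∑ i ∈ Finset.range (S.steps + 1), S.mult i

/-- The weight of an SSOT, as a finitely supported exponent vector; the variable with
index `j` records the letter `j + 1`. -/
def wt (S : SSOT) : ℕ →₀ ℕ := ∑ i ∈ Finset.range S.steps, Finsupp.single i (S.mult (i + 1))

/-- `com S` : the weight vector of the profile of `S`, as a weak composition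
(the `i`-th entry is the number of letters equal to `i+1` in the profile). -/
def comList (S : SSOT) : List ℕ := (List.range S.steps).map fun i => S.mult (i + 1)

/-- `cum S i` : the position in the profile of `S` after all letters `≤ i`. -/
def cum (S : SSOT) (i : ℕ) : ℕ := ∑ j ∈ Finset.range (i + 1), S.mult j

/-- number of deletion substeps of step `i`, namely `|S^{i-1} \ S'^i|`. -/
def delc (S : SSOT) (i : ℕ) : ℕ := (S.A (i - 1)).card - (S.D i).card

/-- The letter occupying position `m` (for `1 ≤ m ≤ length`) of the profile of `S`. -/
def letterOf (S : SSOT) (m : ℕ) : ℕ := sInf {i | m ≤ S.cum i}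

end SSOT

/-- The exponent vector associated to a weak composition. -/
def listWt (c : List ℕ) : ℕ →₀ ℕ :=
  ∑ i ∈ Finset.range c.length, Finsupp.single i (c.getD i 0)

/-- The SSOT function `ss_{λ,n}` : the generating function `∑_{S ∈ SSOT_n(λ)} x^S`,
defined coefficientwise. -/
def ssotFun (l : YoungDiagram) (n : ℕ) : MvPowerSeries ℕ ℤ :=
  fun d => (Nat.card {S : SSOT // S.shape = l ∧ S.length = n ∧ S.wt = d} : ℤ)

/-- The SSOT function with rational coefficients. -/
def ssotFunQ (l : YoungDiagram) (n : ℕ) : MvPowerSeries ℕ ℚ :=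
  fun d => (Nat.card {S : SSOT // S.shape = l ∧ S.length = n ∧ S.wt = d} : ℚ)

/-- The SSOT function with complex coefficients. -/
def ssotFunC (l : YoungDiagram) (n : ℕ) : MvPowerSeries ℕ ℂ :=
  fun d => (Nat.card {S : SSOT // S.shape = l ∧ S.length = n ∧ S.wt = d} : ℂ)

/-- The full SSOT function `ss_λ = ∑_n ss_{λ,n}`. -/
def ssotFull (l : YoungDiagram) : MvPowerSeries ℕ ℤ :=
  fun d => (Nat.card {S : SSOT // S.shape = l ∧ S.wt = d} : ℤ)

/-- Setting the variables `x_{k+1} = x_{k+2} = ⋯ = 0` in a power series: only monomials in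
the first `k` variables survive. -/
def restrictVars (k : ℕ) (f : MvPowerSeries ℕ ℤ) : MvPowerSeries ℕ ℤ :=
  fun d => if ∀ i ∈ d.support, i < k then MvPowerSeries.coeff d f else 0

/-! ### Quasisymmetric functions -/

/-- A strong composition: all parts are positive. -/
def StrongComp (a : List ℕ) : Prop := ∀ x ∈ a, 0 < x

/-- `Refines b a` : the parts of `b` can be grouped into consecutive blocks whose sums
are the parts of `a`, in order. -/
def Refines (b a : List ℕ) : Prop :=
  ∃ L : List (List ℕ), L.flatten = b ∧ L.map List.sum = a

/-- The values of a finitely supported exponent vector, listed with variable indices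
increasing. -/
def sortedVals (d : ℕ →₀ ℕ) : List ℕ := (d.support.sort (· ≤ ·)).map fun i => d i

/-- The monomial quasisymmetric function `M_b`. -/
def monQSym (b : List ℕ) : MvPowerSeries ℕ ℤ :=
  fun d => if sortedVals d = b then 1 else 0

/-- Gessel's fundamental quasisymmetric function `F_a = ∑_{b ∈ ref(a)} M_b`. -/
def fundQSym (a : List ℕ) : MvPowerSeries ℕ ℤ :=
  ∑ᶠ b ∈ {b : List ℕ | StrongComp b ∧ Refines b a}, monQSym b

/-! ### Oscillating tableaux and descent compositions -/

/-- An oscillating tableau of shape `l` and length `n` : a sequence of partitions starting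
at `∅`, ending at `l` (where it stays forever), with consecutive terms differing by one box. -/
def IsOT (O : ℕ → YoungDiagram) (n : ℕ) (l : YoungDiagram) : Prop :=
  O 0 = ⊥ ∧ (∀ j, n ≤ j → O j = l) ∧
    ∀ j, j < n → YCovers (O j) (O (j + 1)) ∨ YCovers (O (j + 1)) (O j)

/-- Move `j` (from `O (j-1)` to `O j`) is an addition. -/
def IsAdd (O : ℕ → YoungDiagram) (j : ℕ) : Prop := O (j - 1) ≤ O j

/-- Position `j` is a descent of the oscillating tableau `O` : a maximal
(deletions-then-additions) segment ends at `j`.  This happens exactly when move `j+1` is a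
deletion following an addition, or two consecutive additions break the strictly-increasing
northeast order, or two consecutive deletions break the strictly-decreasing northeast order. -/
def IsDescent (O : ℕ → YoungDiagram) (j : ℕ) : Prop :=
  (IsAdd O j ∧ ¬ IsAdd O (j + 1)) ∨
  (IsAdd O j ∧ IsAdd O (j + 1) ∧
    ∃ B B' : ℕ × ℕ, B ∈ O j ∧ B ∉ O (j - 1) ∧ B' ∈ O (j + 1) ∧ B' ∉ O j ∧ ¬ boxNE B B') ∨
  (¬ IsAdd O j ∧ ¬ IsAdd O (j + 1) ∧
    ∃ B B' : ℕ × ℕ, B ∈ O (j - 1) ∧ B ∉ O j ∧ B' ∈ O j ∧ B' ∉ O (j + 1) ∧ ¬ boxNE B' B)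

/-- The descent set `Des O ⊆ {1, …, n-1}` of an oscillating tableau of length `n`. -/
def DesSet (O : ℕ → YoungDiagram) (n : ℕ) : Finset ℕ :=
  (Finset.Ico 1 n).filter (IsDescent O)

/-- successive differences of a list. -/
def diffs (L : List ℕ) : List ℕ := (L.zip (0 :: L)).map fun p => p.1 - p.2

/-- The descent composition `des O = (d₁ - d₀, …, d_k - d_{k-1})` of an oscillating tableau
of length `n`, where `Des O = {d₁ < ⋯ < d_{k-1}}`, `d₀ = 0` and `d_k = n`. -/
def desComp (O : ℕ → YoungDiagram) (n : ℕ) : List ℕ :=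
  if n = 0 then [] else diffs ((DesSet O n ∪ {n}).sort (· ≤ ·))

/-! ### Standardization -/

/-- `IsStd S O` : the oscillating tableau `O` is the standardization of the SSOT `S`;
the substeps of step `i` of `S` occupy the positions in `(cum S (i-1), cum S i]`,
first the deletions (from `S^{i-1}` down to `S'^i`, boxes strictly decreasing in the
northeast order, i.e. removed from right to left), then the additions (from `S'^i` up to
`S^i`, boxes strictly increasing in the northeast order, i.e. added from left to right). -/
def IsStd (S : SSOT) (O : ℕ → YoungDiagram) : Prop :=
  (∀ j, S.length ≤ j → O j = S.shape) ∧
  (∀ i, O (S.cum i) = S.A i) ∧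
  (∀ i, 1 ≤ i → O (S.cum (i - 1) + S.delc i) = S.D i) ∧
  (∀ i m, 1 ≤ i → S.cum (i - 1) < m → m ≤ S.cum (i - 1) + S.delc i →
    YCovers (O m) (O (m - 1))) ∧
  (∀ i m, 1 ≤ i → S.cum (i - 1) + S.delc i < m → m ≤ S.cum i →
    YCovers (O (m - 1)) (O m)) ∧
  (∀ i m, 1 ≤ i → S.cum (i - 1) < m → m + 1 ≤ S.cum (i - 1) + S.delc i →
    ∀ B B' : ℕ × ℕ, B ∈ O (m - 1) → B ∉ O m → B' ∈ O m → B' ∉ O (m + 1) → boxNE B' B) ∧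
  (∀ i m, 1 ≤ i → S.cum (i - 1) + S.delc i < m → m + 1 ≤ S.cum i →
    ∀ B B' : ℕ × ℕ, B ∈ O m → B ∉ O (m - 1) → B' ∈ O (m + 1) → B' ∉ O m → boxNE B B')

/-- An SSOT is quasi-Yamanouchi if its weight vector equals its descent composition. -/
def IsQY (S : SSOT) : Prop :=
  ∃ O : ℕ → YoungDiagram, IsStd S O ∧ S.comList = desComp O S.length

/-! ### Semistandard Young tableaux, column insertion, the Sundaram construction -/

/-- `f` is (the entry function of) a semistandard Young tableau of shape `μ`, with positive
integer entries: rows weakly increase, columns strictly increase, entries vanish outside `μ`. -/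
def IsSsytOn (μ : YoungDiagram) (f : ℕ → ℕ → ℕ) : Prop :=
  (∀ i j₁ j₂, j₁ ≤ j₂ → (i, j₂) ∈ μ → f i j₁ ≤ f i j₂) ∧
  (∀ i₁ i₂ j, i₁ < i₂ → (i₂, j) ∈ μ → f i₁ j < f i₂ j) ∧
  (∀ i j, (i, j) ∉ μ → f i j = 0) ∧
  (∀ i j, (i, j) ∈ μ → 0 < f i j)

/-- The set of semistandard Young tableaux of shape `l`. -/
def SSYTPos (l : YoungDiagram) := {f : ℕ → ℕ → ℕ // IsSsytOn l f}

/-- `ColIns f μ v g ν` : column-inserting the value `v` into the tableau `f` of shape `μ`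
produces the tableau `g` of shape `ν` (one more box): `v` is inserted in column `0`, where it
replaces the topmost entry `≥ v` (which is bumped into the next column, and so on); in the
final column `cmax` the incoming value is strictly larger than all entries and is appended
at the bottom, creating the new box. -/
def ColIns (f : ℕ → ℕ → ℕ) (μ : YoungDiagram) (v : ℕ) (g : ℕ → ℕ → ℕ) (ν : YoungDiagram) :
    Prop :=
  μ ≤ ν ∧ ν.card = μ.card + 1 ∧
  ∃ (cmax : ℕ) (w rr : ℕ → ℕ),
    w 0 = v ∧
    (∀ j, j < cmax →
      (rr j, j) ∈ μ ∧ w j ≤ f (rr j) j ∧ (∀ i, i < rr j → f i j < w j) ∧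
      w (j + 1) = f (rr j) j ∧ g (rr j) j = w j) ∧
    (∀ i, (i, cmax) ∈ μ → f i cmax < w cmax) ∧
    (rr cmax, cmax) ∉ μ ∧ (rr cmax, cmax) ∈ ν ∧ g (rr cmax) cmax = w cmax ∧
    (∀ i j, ¬(j ≤ cmax ∧ i = rr j) → g i j = f i j)

/-- The Sundaram construction along an SSOT `S` with standardization `O`: a sequence of
semistandard Young tableaux `T m` of shape `O m`; at an addition substep the new box receives
the current letter of `S`; at a deletion substep the entry in the removed box is
column-unbumped, ejecting the value `v m` (equivalently, column-inserting `v m` into `T m`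
recovers `T (m-1)`). -/
def SundaramBuild (S : SSOT) (O : ℕ → YoungDiagram) (T : ℕ → ℕ → ℕ → ℕ) (v : ℕ → ℕ) : Prop :=
  (∀ i j, T 0 i j = 0) ∧
  (∀ m, IsSsytOn (O m) (T m)) ∧
  (∀ m, 1 ≤ m → m ≤ S.length →
    (YCovers (O (m - 1)) (O m) →
      (∀ B : ℕ × ℕ, B ∈ O m → B ∉ O (m - 1) → T m B.1 B.2 = S.letterOf m) ∧
      (∀ i j : ℕ, ((i, j) ∈ O m → (i, j) ∈ O (m - 1)) → T m i j = T (m - 1) i j)) ∧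
    (YCovers (O m) (O (m - 1)) →
      ColIns (T m) (O m) (v m) (T (m - 1)) (O (m - 1))))

/-- A Burge (two-row, lexicographic, column-strict) array, stored as the list of its
columns `(top, bottom)`. -/
structure BurgeArray where
  cols : List (ℕ × ℕ)
  pos : ∀ p ∈ cols, 0 < p.2
  burge : ∀ p ∈ cols, p.2 < p.1
  lex : cols.Chain' fun p q => p.1 < q.1 ∨ (p.1 = q.1 ∧ p.2 ≤ q.2)

/-- The two-row array recorded by the Sundaram construction: the pairs
`(letter, ejected value)` at the deletion substeps, in order. -/
def delList (S : SSOT) (O : ℕ → YoungDiagram) (v : ℕ → ℕ) : List (ℕ × ℕ) :=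
  (((List.range (S.length + 1)).filter fun m =>
      decide (1 ≤ m ∧ YCovers (O m) (O (m - 1))))).map fun m => (S.letterOf m, v m)

/-- The weight of (the entry function of) a tableau of shape `l`; the variable with
index `j` records the entry `j + 1`. -/
def tabWt (l : YoungDiagram) (f : ℕ → ℕ → ℕ) : ℕ →₀ ℕ :=
  ∑ c ∈ l.cells, Finsupp.single (f c.1 c.2 - 1) 1

/-- The Schur function `s_l`, as the generating function of semistandard Young tableaux
of shape `l`, defined coefficientwise. -/
def schur (l : YoungDiagram) : MvPowerSeries ℕ ℤ :=
  fun d => (Nat.card {T : SSYTPos l // tabWt l T.1 = d} : ℤ)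

/-- The Schur function with rational coefficients. -/
def schurQ (l : YoungDiagram) : MvPowerSeries ℕ ℚ :=
  fun d => (Nat.card {T : SSYTPos l // tabWt l T.1 = d} : ℚ)

/-- The expansion of the product `∏_{i<j} (1 - x_i x_j)` : the coefficient of a monomial is
the signed count of the sets of pairs `i < j` summing to its exponent vector. -/
def littlewoodProd : MvPowerSeries ℕ ℤ :=
  fun d => ∑ᶠ F ∈ {F : Finset (ℕ × ℕ) | (∀ p ∈ F, p.1 < p.2) ∧
      (∑ p ∈ F, (Finsupp.single p.1 1 + Finsupp.single p.2 1)) = d},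
    ((-1 : ℤ) ^ F.card)

/-! ### Vertical strip closures, dominance, special shapes -/

/-- Every column of `β` has even length, i.e. the conjugate partition `β'` is even. -/
def EvenConj (β : YoungDiagram) : Prop := ∀ j, Even (β.colLen j)

/-- `VReach μ ν` : `ν` is obtained from `μ` by successively adding vertical strips of even
size. -/
inductive VReach : YoungDiagram → YoungDiagram → Prop
  | refl (μ : YoungDiagram) : VReach μ μ
  | step {μ ν ρ : YoungDiagram} : VReach μ ν → VStrip ν ρ → Even (ρ.card - ν.card) →
      VReach μ ρ

/-- Dominance order: `Dom μ ν` means `ν ≤ μ`, i.e. all partial sums of the parts of `ν`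
are at most those of `μ`. -/
def Dom (μ ν : YoungDiagram) : Prop :=
  ∀ i, ∑ j ∈ Finset.range i, ν.rowLen j ≤ ∑ j ∈ Finset.range i, μ.rowLen j

/-- The square Young diagram with `m` rows of length `m`. -/
def squareYD (m : ℕ) : YoungDiagram where
  cells := Finset.range m ×ˢ Finset.range m
  isLowerSet := by
    rintro ⟨a1, a2⟩ ⟨b1, b2⟩ ⟨h1, h2⟩ ha
    simp only [Finset.coe_product, Set.mem_prod, Finset.mem_coe, Finset.mem_range] at ha ⊢
    omega

/-- The partition `λ̄ = (λ₁ + r, λ₂ + r, λ₃, …, λ_l)`. -/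
def barYD (l : YoungDiagram) (r : ℕ) : YoungDiagram where
  cells :=
    (l.cells.filter fun c => 2 ≤ c.1) ∪
      ({0} : Finset ℕ) ×ˢ Finset.range (l.rowLen 0 + r) ∪
      ({1} : Finset ℕ) ×ˢ Finset.range (l.rowLen 1 + r)
  isLowerSet := by
    have h01 : l.rowLen 1 ≤ l.rowLen 0 := l.rowLen_anti 0 1 (by omega)
    rintro ⟨a1, a2⟩ ⟨b1, b2⟩ ⟨h1, h2⟩ ha
    simp only [Finset.coe_union, Set.mem_union, Finset.mem_coe, Finset.mem_filter,
      Finset.mem_product, Finset.mem_singleton, Finset.mem_range] at ha ⊢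
    rcases ha with ((⟨hmem, hge⟩ | ⟨ha1, ha2⟩) | ⟨ha1, ha2⟩)
    · have hlt : a2 < l.rowLen a1 := YoungDiagram.mem_iff_lt_rowLen.mp
        (by simpa using hmem)
      rcases Nat.lt_or_ge b1 2 with hb | hb
      · have h1a : l.rowLen a1 ≤ l.rowLen 1 := l.rowLen_anti 1 a1 (by omega)
        rcases Nat.lt_or_ge b1 1 with hb0 | hb1
        · exact Or.inl (Or.inr ⟨by omega, by omega⟩)
        · exact Or.inr ⟨by omega, by omega⟩
      · refine Or.inl (Or.inl ⟨?_, by omega⟩)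
        have := l.isLowerSet (a := (a1, a2)) (b := (b1, b2)) ⟨h1, h2⟩ (by simpa using hmem)
        simpa using this
    · exact Or.inl (Or.inr ⟨by omega, by omega⟩)
    · rcases Nat.lt_or_ge b1 1 with hb0 | hb1
      · exact Or.inl (Or.inr ⟨by omega, by omega⟩)
      · exact Or.inr ⟨by omega, by omega⟩

end


lemma SSOT.ext' (S S' : SSOT) (h1 : S.steps = S'.steps) (h2 : S.A = S'.A) (h3 : S.D = S'.D) :
    S = S' := by
  cases S; cases S'
  simp only at h1 h2 h3
  subst h1 h2 h3
  rfl

lemma SSOT.delc_le_mult (S : SSOT) (i : ℕ) (hi : i ≠ 0) : S.delc i ≤ S.mult i := by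
  simp only [SSOT.delc, SSOT.mult, if_neg hi]
  omega

lemma SSOT.cum_succ' (S : SSOT) (i : ℕ) (hi : 1 ≤ i) : S.cum i = S.cum (i - 1) + S.mult i := by
  obtain ⟨j, rfl⟩ : ∃ j, i = j + 1 := ⟨i - 1, by omega⟩
  simp [SSOT.cum, Finset.sum_range_succ]

lemma comList_getD (S : SSOT) (i : ℕ) (h : i < S.steps) :
    S.comList.getD i 0 = S.mult (i + 1) := by
  simp [SSOT.comList, List.getD_eq_getElem?_getD, List.getElem?_map, List.getElem?_range, h]

lemma delc_eq_aux (O : ℕ → YoungDiagram) (S S' : SSOT) (hstd : IsStd S O) (hstd' : IsStd S' O)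
    (hcum : ∀ j, S.cum j = S'.cum j) (i : ℕ) (hi : 1 ≤ i) (hlt : S.delc i < S'.delc i) :
    False := by
  set m := S.cum (i - 1) + S.delc i + 1 with hm
  have hdm : S'.delc i ≤ S'.mult i := S'.delc_le_mult i (by omega)
  have hc1 := S.cum_succ' i hi
  have hc1' := S'.cum_succ' i hi
  have hcc := hcum (i - 1)
  have hci := hcum i
  have hm2 : m ≤ S.cum i := by omega
  have cover1 : YCovers (O (m - 1)) (O m) :=
    hstd.2.2.2.2.1 i m hi (by omega) hm2
  have cover2 : YCovers (O m) (O (m - 1)) :=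
    hstd'.2.2.2.1 i m hi (by omega) (by omega)
  obtain ⟨-, h1⟩ := cover1
  obtain ⟨-, h2⟩ := cover2
  omega

/-- For every oscillating tableau `O` of shape `λ` and length `n`, the map
`com : SSOT(O) → (weak compositions)`, sending an SSOT `S` in the standardization fiber of
`O` to the weight vector of its profile, is injective and weight-preserving
(`x^{com S} = x^S`). -/
theorem comList_injOn_fiber (l : YoungDiagram) (n : ℕ) (O : ℕ → YoungDiagram)
    (hO : IsOT O n l) :
    Set.InjOn SSOT.comList {S : SSOT | S.shape = l ∧ S.length = n ∧ IsStd S O} ∧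
    ∀ S : SSOT, S.shape = l → S.length = n → IsStd S O → listWt S.comList = S.wt := by
  constructor
  · rintro S ⟨-, -, hstd⟩ S' ⟨-, -, hstd'⟩ hcom
    have hsteps : S.steps = S'.steps := by
      have := congrArg List.length hcom
      simpa [SSOT.comList] using this
    have hmult : ∀ i, S.mult i = S'.mult i := by
      intro i
      rcases Nat.eq_zero_or_pos i with rfl | hi
      · simp [SSOT.mult]
      rcases Nat.lt_or_ge (i - 1) S.steps with h | h
      · have h1 : S.comList.getD (i - 1) 0 = S'.comList.getD (i - 1) 0 := by rw [hcom]
        rw [comList_getD S _ h, comList_getD S' _ (hsteps ▸ h)] at h1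
        have hi1 : i - 1 + 1 = i := by omega
        rwa [hi1] at h1
      · have e1 : S.A (i - 1) = S.A S.steps := S.stableA _ (by omega)
        have e2 : S.A i = S.A S.steps := S.stableA _ (by omega)
        have e3 : S.D i = S.A S.steps := S.stableD _ (by omega)
        have f1 : S'.A (i - 1) = S'.A S'.steps := S'.stableA _ (by omega)
        have f2 : S'.A i = S'.A S'.steps := S'.stableA _ (by omega)
        have f3 : S'.D i = S'.A S'.steps := S'.stableD _ (by omega)
        simp [SSOT.mult, (by omega : i ≠ 0), e1, e2, e3, f1, f2, f3]
    have hcum : ∀ j, S.cum j = S'.cum j := fun j =>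
      Finset.sum_congr rfl fun k _ => hmult k
    have hA : ∀ i, S.A i = S'.A i := by
      intro i
      rw [← hstd.2.1 i, ← hstd'.2.1 i, hcum]
    have hdelc : ∀ i, 1 ≤ i → S.delc i = S'.delc i := by
      intro i hi
      by_contra hne
      rcases Nat.lt_or_ge (S.delc i) (S'.delc i) with h | h
      · exact delc_eq_aux O S S' hstd hstd' hcum i hi h
      · exact delc_eq_aux O S' S hstd' hstd (fun j => (hcum j).symm) i hi (by omega)
    have hD : ∀ i, S.D i = S'.D i := by
      intro i
      rcases Nat.eq_zero_or_pos i with rfl | hi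
      · rw [S.hD0, S'.hD0]
      · rw [← hstd.2.2.1 i hi, ← hstd'.2.2.1 i hi, hcum, hdelc i hi]
    exact SSOT.ext' S S' hsteps (funext hA) (funext hD)
  · intro S _ _ _
    have hlen : S.comList.length = S.steps := by simp [SSOT.comList]
    rw [listWt, hlen, SSOT.wt]
    exact Finset.sum_congr rfl fun i hi => by
      rw [comList_getD S i (Finset.mem_range.mp hi)]
end

section
/- For every oscillating tableau O of shape λ and length n, the set of strong compositions lying in the image com(SSOT(O)) equals ref(des O), the set of strong compositions refining the descent composition des O of O. -/
open scoped BigOperators Classical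

section AuxProof

lemma hstrip_refl (μ : YoungDiagram) : HStrip μ μ :=
  ⟨le_refl _, fun _ _ _ h h' _ _ => absurd h h'⟩

lemma cover_newbox {μ ν : YoungDiagram} (h : YCovers μ ν) :
    ∃ C : ℕ × ℕ, C ∈ ν ∧ C ∉ μ ∧ ∀ B : ℕ × ℕ, B ∈ ν → B ∉ μ → B = C := by
  have hsub : μ.cells ⊆ ν.cells := YoungDiagram.cells_subset_iff.mpr h.1
  have hcard : (ν.cells \ μ.cells).card = 1 := by
    rw [Finset.card_sdiff_of_subset hsub]
    have h2 := h.2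
    unfold YoungDiagram.card at h2
    omega
  obtain ⟨C, hC⟩ := Finset.card_eq_one.mp hcard
  refine ⟨C, ?_, ?_, ?_⟩
  · have : C ∈ ν.cells \ μ.cells := hC ▸ Finset.mem_singleton_self C
    exact (YoungDiagram.mem_cells _).mp (Finset.mem_sdiff.mp this).1
  · have : C ∈ ν.cells \ μ.cells := hC ▸ Finset.mem_singleton_self C
    exact fun hc => (Finset.mem_sdiff.mp this).2 ((YoungDiagram.mem_cells _).mpr hc)
  · intro B hB hB'
    have : B ∈ ν.cells \ μ.cells := Finset.mem_sdiff.mpr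
      ⟨(YoungDiagram.mem_cells _).mpr hB, fun hc => hB' ((YoungDiagram.mem_cells _).mp hc)⟩
    simpa [hC] using this

lemma not_isAdd_of_del {μ ν : YoungDiagram} (h : YCovers ν μ) : ¬ μ ≤ ν := by
  intro hle
  have := le_antisymm h.1 hle
  rw [this] at h
  have h2 := h.2
  omega

lemma chain_hstrip (Q : ℕ → YoungDiagram) :
    ∀ m : ℕ, (∀ t, t < m → YCovers (Q t) (Q (t+1))) →
    (∀ t, 1 ≤ t → t + 1 ≤ m → ∀ B B' : ℕ × ℕ, B ∈ Q t → B ∉ Q (t-1) → B' ∈ Q (t+1) →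
      B' ∉ Q t → B.2 < B'.2) →
    HStrip (Q 0) (Q m) ∧
      (∀ B : ℕ × ℕ, B ∈ Q m → B ∉ Q 0 → ∃ C : ℕ × ℕ, C ∈ Q m ∧ C ∉ Q (m-1) ∧ B.2 ≤ C.2) := by
  intro m
  induction m with
  | zero =>
    intro _ _
    exact ⟨hstrip_refl _, fun B hB hB' => absurd hB hB'⟩
  | succ m ih =>
    intro hcov hne
    obtain ⟨IH1, IH2⟩ := ih (fun t ht => hcov t (by omega)) (fun t h1 h2 => hne t h1 (by omega))
    obtain ⟨C, hCmem, hCnot, hCuniq⟩ := cover_newbox (hcov m (by omega))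
    have hcolC : ∀ B : ℕ × ℕ, B ∈ Q m → B ∉ Q 0 → B.2 < C.2 := by
      intro B hB hB0
      rcases Nat.eq_zero_or_pos m with hm | hm
      · subst hm; exact absurd hB hB0
      · obtain ⟨C0, hC0m, hC0n, hle⟩ := IH2 B hB hB0
        have := hne m hm (le_refl _) C0 C hC0m hC0n hCmem hCnot
        omega
    have hQ0le : Q 0 ≤ Q (m+1) := le_trans IH1.1 (hcov m (by omega)).1
    constructor
    · refine ⟨hQ0le, ?_⟩
      intro i1 i2 j h1 h1' h2 h2'
      by_cases c1 : (i1, j) ∈ Q m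
      · by_cases c2 : (i2, j) ∈ Q m
        · exact IH1.2 i1 i2 j c1 h1' c2 h2'
        · have he2 : ((i2, j) : ℕ × ℕ) = C := hCuniq _ h2 c2
          have hlt := hcolC (i1, j) c1 h1'
          have : j = C.2 := congrArg Prod.snd he2
          simp only [this] at hlt
          omega
      · have he1 : ((i1, j) : ℕ × ℕ) = C := hCuniq _ h1 c1
        by_cases c2 : (i2, j) ∈ Q m
        · have hlt := hcolC (i2, j) c2 h2'
          have : j = C.2 := congrArg Prod.snd he1
          simp only [this] at hlt
          omega
        · have he2 : ((i2, j) : ℕ × ℕ) = C := hCuniq _ h2 c2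
          have := he1.trans he2.symm
          exact congrArg Prod.fst this
    · intro B hB hB0
      refine ⟨C, hCmem, by simpa using hCnot, ?_⟩
      by_cases c1 : B ∈ Q m
      · exact le_of_lt (hcolC B c1 hB0)
      · rw [hCuniq B hB c1]

lemma hstrip_add_run (O : ℕ → YoungDiagram) (s e : ℕ) (hse : s ≤ e)
    (hcov : ∀ m, s < m → m ≤ e → YCovers (O (m-1)) (O m))
    (hne : ∀ m, s < m → m + 1 ≤ e → ∀ B B' : ℕ × ℕ, B ∈ O m → B ∉ O (m-1) → B' ∈ O (m+1) →
      B' ∉ O m → B.2 < B'.2) :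
    HStrip (O s) (O e) := by
  have key := (chain_hstrip (fun t => O (s + t)) (e - s) ?_ ?_).1
  · have h1 : s + 0 = s := by omega
    have h2 : s + (e - s) = e := by omega
    rw [h1, h2] at key
    exact key
  · intro t ht
    have h1 : s + t = (s + t + 1) - 1 := by omega
    have := hcov (s + t + 1) (by omega) (by omega)
    rw [← h1] at this
    exact this
  · intro t h1 h2 B B' hB hB' hB2 hB2'
    have e1 : s + (t - 1) = (s + t) - 1 := by omega
    have e2 : s + (t + 1) = (s + t) + 1 := by omega
    rw [e1] at hB'
    rw [e2] at hB2
    exact hne (s + t) (by omega) (by omega) B B' hB hB' hB2 hB2'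

lemma hstrip_del_run (O : ℕ → YoungDiagram) (s e : ℕ) (hse : s ≤ e)
    (hcov : ∀ m, s < m → m ≤ e → YCovers (O m) (O (m-1)))
    (hne : ∀ m, s < m → m + 1 ≤ e → ∀ B B' : ℕ × ℕ, B ∈ O (m-1) → B ∉ O m → B' ∈ O m →
      B' ∉ O (m+1) → B'.2 < B.2) :
    HStrip (O e) (O s) := by
  have key := (chain_hstrip (fun t => O (e - t)) (e - s) ?_ ?_).1
  · have h1 : e - 0 = e := by omega
    have h2 : e - (e - s) = s := by omega
    rw [h1, h2] at key
    exact key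
  · intro t ht
    have h1 : e - (t + 1) = (e - t) - 1 := by omega
    have := hcov (e - t) (by omega) (by omega)
    rw [← h1] at this
    exact this
  · intro t h1 h2 B B' hB hB' hB2 hB2'
    set m := e - t with hm
    have e1 : e - (t - 1) = m + 1 := by omega
    have e2 : e - (t + 1) = m - 1 := by omega
    rw [e1] at hB'
    rw [e2] at hB2
    -- hB : B ∈ O m, hB' : B ∉ O (m+1), hB2 : B' ∈ O (m-1), hB2' : B' ∉ O m
    exact hne m (by omega) (by omega) B' B hB2 hB2' hB hB'

lemma card_add_run (O : ℕ → YoungDiagram) (s e : ℕ) (hse : s ≤ e)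
    (hcov : ∀ m, s < m → m ≤ e → YCovers (O (m-1)) (O m)) :
    (O e).card = (O s).card + (e - s) := by
  induction e, hse using Nat.le_induction with
  | base => simp
  | succ e he ih =>
    have h1 := (hcov (e+1) (by omega) (by omega)).2
    simp only [Nat.add_sub_cancel] at h1
    have h2 := ih (fun m hm hm' => hcov m hm (by omega))
    omega

lemma card_del_run (O : ℕ → YoungDiagram) (s e : ℕ) (hse : s ≤ e)
    (hcov : ∀ m, s < m → m ≤ e → YCovers (O m) (O (m-1))) :
    (O s).card = (O e).card + (e - s) := by
  induction e, hse using Nat.le_induction with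
  | base => simp
  | succ e he ih =>
    have h1 := (hcov (e+1) (by omega) (by omega)).2
    simp only [Nat.add_sub_cancel] at h1
    have h2 := ih (fun m hm hm' => hcov m hm (by omega))
    omega

lemma le_add_run (O : ℕ → YoungDiagram) (s e : ℕ) (hse : s ≤ e)
    (hcov : ∀ m, s < m → m ≤ e → YCovers (O (m-1)) (O m)) :
    O s ≤ O e := by
  induction e, hse using Nat.le_induction with
  | base => exact le_refl _
  | succ e he ih =>
    refine le_trans (ih (fun m hm hm' => hcov m hm (by omega))) ?_
    have := (hcov (e+1) (by omega) (by omega)).1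
    simpa using this

lemma le_del_run (O : ℕ → YoungDiagram) (s e : ℕ) (hse : s ≤ e)
    (hcov : ∀ m, s < m → m ≤ e → YCovers (O m) (O (m-1))) :
    O e ≤ O s := by
  induction e, hse using Nat.le_induction with
  | base => exact le_refl _
  | succ e he ih =>
    refine le_trans ?_ (ih (fun m hm hm' => hcov m hm (by omega)))
    have := (hcov (e+1) (by omega) (by omega)).1
    simpa using this

lemma strongcomp_nil_of_sum_eq_zero {b : List ℕ} (hb : StrongComp b) (h : b.sum = 0) :
    b = [] := by
  cases b with
  | nil => rfl
  | cons x xs =>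
    have h1 := hb x (List.mem_cons_self)
    simp only [List.sum_cons] at h
    exact (by omega : False).elim

lemma take_sum_le (b : List ℕ) (j j' : ℕ) (h : j ≤ j') :
    (b.take j).sum ≤ (b.take j').sum := by
  have he : b.take j' = b.take j ++ (b.drop j).take (j' - j) := by
    rw [← List.take_add]; congr 1; omega
  rw [he, List.sum_append]; omega

lemma take_sum_lt (b : List ℕ) (hb : StrongComp b) (j j' : ℕ) (h : j < j') (h' : j' ≤ b.length) :
    (b.take j).sum < (b.take j').sum := by
  have he : b.take j' = b.take j ++ (b.drop j).take (j' - j) := by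
    rw [← List.take_add]; congr 1; omega
  rw [he, List.sum_append]
  have hne : (b.drop j).take (j' - j) ≠ [] := by
    rw [← List.length_pos_iff, List.length_take, List.length_drop]; omega
  have hpos : 0 < ((b.drop j).take (j' - j)).sum :=
    List.sum_pos _ (fun x hx => hb x (List.drop_subset _ _ (List.take_subset _ _ hx))) hne
  omega

lemma sum_eq_of_refines {b a : List ℕ} (h : Refines b a) : b.sum = a.sum := by
  obtain ⟨L, hf, hm⟩ := h
  rw [← hf, ← hm, List.sum_flatten]

lemma psums_of_refines {b a : List ℕ} (h : Refines b a) :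
    ∀ t, t ≤ a.length → ∃ j, j ≤ b.length ∧ (a.take t).sum = (b.take j).sum := by
  obtain ⟨L, hflat, hmap⟩ := h
  intro t ht
  have hsplit : L.flatten = (L.take t).flatten ++ (L.drop t).flatten := by
    rw [← List.flatten_append, List.take_append_drop]
  refine ⟨((L.take t).flatten).length, ?_, ?_⟩
  · rw [← hflat, hsplit, List.length_append]; omega
  · have h1 : a.take t = (L.take t).map List.sum := by rw [← hmap, List.map_take]
    have h2 : b.take ((L.take t).flatten).length = (L.take t).flatten := by
      rw [← hflat, hsplit]
      exact List.take_left
    rw [h1, h2, List.sum_flatten]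

lemma refines_of_psums : ∀ (a b : List ℕ), StrongComp b → StrongComp a → b.sum = a.sum →
    (∀ t, t ≤ a.length → ∃ j, j ≤ b.length ∧ (a.take t).sum = (b.take j).sum) →
    Refines b a := by
  intro a
  induction a with
  | nil =>
    intro b hb _ hsum _
    have hb0 : b = [] := strongcomp_nil_of_sum_eq_zero hb (by simpa using hsum)
    subst hb0
    exact ⟨[], rfl, rfl⟩
  | cons x a' ih =>
    intro b hb ha hsum hps
    obtain ⟨j, hjle, hjeq⟩ := hps 1 (by simp)
    have hx : x = (b.take j).sum := by simpa using hjeq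
    have hb2 : StrongComp (b.drop j) := fun y hy => hb y (List.drop_subset _ _ hy)
    have hsplitb : (b.take j).sum + (b.drop j).sum = b.sum := by
      rw [← List.sum_append, List.take_append_drop]
    have hsuma : b.sum = x + a'.sum := by simpa using hsum
    have hsum2 : (b.drop j).sum = a'.sum := by omega
    have hps2 : ∀ t, t ≤ a'.length →
        ∃ j2, j2 ≤ (b.drop j).length ∧ (a'.take t).sum = ((b.drop j).take j2).sum := by
      intro t ht
      rcases Nat.eq_zero_or_pos t with h0 | hpos
      · subst h0; exact ⟨0, by simp, by simp⟩
      obtain ⟨j', hj'le, hj'eq⟩ := hps (t+1) (by simpa using Nat.succ_le_succ ht)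
      have hsum' : x + (a'.take t).sum = (b.take j').sum := by
        simpa [List.take_succ_cons] using hj'eq
      have hposa : 0 < (a'.take t).sum := by
        refine List.sum_pos _ (fun y hy => ha y (List.mem_cons_of_mem _
          (List.take_subset _ _ hy))) ?_
        rw [← List.length_pos_iff, List.length_take]; omega
      have hjj' : j < j' := by
        by_contra hcon
        have hle := take_sum_le b j' j (by omega)
        omega
      refine ⟨j' - j, by rw [List.length_drop]; omega, ?_⟩
      have hsplit : b.take j' = b.take j ++ (b.drop j).take (j' - j) := by
        rw [← List.take_add]; congr 1; omega
      rw [hsplit, List.sum_append] at hsum'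
      omega
    obtain ⟨L', hL1, hL2⟩ := ih (b.drop j) hb2
      (fun y hy => ha y (List.mem_cons_of_mem _ hy)) hsum2 hps2
    refine ⟨b.take j :: L', ?_, ?_⟩
    · rw [List.flatten_cons, hL1, List.take_append_drop]
    · rw [List.map_cons, hL2, ← hx]

def dFrom (c : ℕ) (L : List ℕ) : List ℕ := (L.zip (c :: L)).map fun p => p.1 - p.2

lemma dFrom_nil (c : ℕ) : dFrom c [] = [] := rfl

lemma dFrom_cons (c x : ℕ) (L : List ℕ) : dFrom c (x :: L) = (x - c) :: dFrom x L := by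
  simp [dFrom, List.zip_cons_cons]

lemma diffs_eq_dFrom (L : List ℕ) : diffs L = dFrom 0 L := rfl

lemma dFrom_length (c : ℕ) (L : List ℕ) : (dFrom c L).length = L.length := by
  simp [dFrom, List.length_zip]

lemma dFrom_strong : ∀ (L : List ℕ) (c : ℕ), List.Pairwise (· < ·) (c :: L) →
    StrongComp (dFrom c L) := by
  intro L
  induction L with
  | nil => intro c _ x hx; simp [dFrom_nil] at hx
  | cons x L' ih =>
    intro c hs
    rw [dFrom_cons]
    obtain ⟨hhead, htail⟩ := List.pairwise_cons.mp hs
    intro y hy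
    rcases List.mem_cons.mp hy with h | h
    · have := hhead x (List.mem_cons_self)
      omega
    · exact ih x htail y h

lemma dFrom_take_sum : ∀ (L : List ℕ) (c t : ℕ), List.Pairwise (· ≤ ·) (c :: L) →
    1 ≤ t → t ≤ L.length → ((dFrom c L).take t).sum = L.getD (t-1) 0 - c := by
  intro L
  induction L with
  | nil => intro c t _ h1 h2; simp at h2; omega
  | cons x L' ih =>
    intro c t hs h1 h2
    obtain ⟨t', rfl⟩ : ∃ t', t = t' + 1 := ⟨t - 1, by omega⟩
    obtain ⟨hhead, htail⟩ := List.pairwise_cons.mp hs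
    rw [dFrom_cons, List.take_succ_cons, List.sum_cons]
    rcases Nat.eq_zero_or_pos t' with h0 | hpos
    · subst h0; simp
    · obtain ⟨t'', rfl⟩ : ∃ t'', t' = t'' + 1 := ⟨t' - 1, by omega⟩
      have hlen : t'' < L'.length := by simpa using h2
      have hih := ih x (t'' + 1) htail (by omega) (by omega)
      rw [hih]
      have hcx : c ≤ x := hhead x (List.mem_cons_self)
      have hxg : x ≤ L'.getD t'' 0 := by
        rw [List.getD_eq_getElem _ _ hlen]
        exact (List.pairwise_cons.mp htail).1 _ (List.getElem_mem hlen)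
      simp only [Nat.add_sub_cancel] at *
      rw [List.getD_cons_succ]
      omega

section FinsetComp

variable {F : Finset ℕ} {n : ℕ}

lemma sortF_sorted_lt (hmem : ∀ m ∈ F, 1 ≤ m) :
    List.Pairwise (· < ·) (0 :: F.sort (· ≤ ·)) := by
  rw [List.pairwise_cons]
  exact ⟨fun b hb => hmem b ((Finset.mem_sort _).mp hb), (Finset.sortedLT_sort F).pairwise⟩

lemma sortF_sorted_le (hmem : ∀ m ∈ F, 1 ≤ m) :
    List.Pairwise (· ≤ ·) (0 :: F.sort (· ≤ ·)) :=
  List.Pairwise.imp (fun h => le_of_lt h) (sortF_sorted_lt hmem)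

lemma diffsF_strong (hmem : ∀ m ∈ F, 1 ≤ m) : StrongComp (diffs (F.sort (· ≤ ·))) := by
  rw [diffs_eq_dFrom]
  exact dFrom_strong _ 0 (sortF_sorted_lt hmem)

lemma diffsF_length : (diffs (F.sort (· ≤ ·))).length = (F.sort (· ≤ ·)).length :=
  dFrom_length 0 _

lemma diffsF_take_sum (hmem : ∀ m ∈ F, 1 ≤ m) (t : ℕ) (h1 : 1 ≤ t)
    (h2 : t ≤ (F.sort (· ≤ ·)).length) :
    ((diffs (F.sort (· ≤ ·))).take t).sum = (F.sort (· ≤ ·)).getD (t-1) 0 := by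
  rw [diffs_eq_dFrom, dFrom_take_sum _ 0 t (sortF_sorted_le hmem) h1 h2]
  omega

lemma diffsF_take_sum_mem (hmem : ∀ m ∈ F, 1 ≤ m) (t : ℕ) (h1 : 1 ≤ t)
    (h2 : t ≤ (F.sort (· ≤ ·)).length) :
    ((diffs (F.sort (· ≤ ·))).take t).sum ∈ F := by
  rw [diffsF_take_sum hmem t h1 h2]
  have hlt : t - 1 < (F.sort (· ≤ ·)).length := by omega
  rw [List.getD_eq_getElem _ _ hlt]
  exact (Finset.mem_sort _).mp (List.getElem_mem hlt)

lemma mem_diffsF_take_sum (hmem : ∀ m ∈ F, 1 ≤ m) {m : ℕ} (hm : m ∈ F) :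
    ∃ t, 1 ≤ t ∧ t ≤ (diffs (F.sort (· ≤ ·))).length ∧
      ((diffs (F.sort (· ≤ ·))).take t).sum = m := by
  obtain ⟨i, hi, hget⟩ := List.mem_iff_getElem.mp ((Finset.mem_sort (α := ℕ) (· ≤ ·)).mpr hm)
  refine ⟨i + 1, by omega, by rw [diffsF_length]; omega, ?_⟩
  rw [diffsF_take_sum hmem _ (by omega) (by omega)]
  simp only [Nat.add_sub_cancel]
  rw [List.getD_eq_getElem _ _ hi, hget]

lemma diffsF_sum (hmem : ∀ m ∈ F, 1 ≤ m) (hn : n ∈ F) (hle : ∀ m ∈ F, m ≤ n) :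
    (diffs (F.sort (· ≤ ·))).sum = n := by
  have hnL : n ∈ F.sort (· ≤ ·) := (Finset.mem_sort (α := ℕ) (· ≤ ·)).mpr hn
  have hlen : 0 < (F.sort (· ≤ ·)).length := by
    rw [List.length_pos_iff]
    intro h
    rw [h] at hnL
    simp at hnL
  have htake : (diffs (F.sort (· ≤ ·))).length ≤ (F.sort (· ≤ ·)).length := by
    rw [diffsF_length]
  have heq : (diffs (F.sort (· ≤ ·))).sum
      = ((diffs (F.sort (· ≤ ·))).take (F.sort (· ≤ ·)).length).sum := by
    rw [List.take_of_length_le htake]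
  rw [heq, diffsF_take_sum hmem _ (by omega) (le_refl _)]
  have hlt : (F.sort (· ≤ ·)).length - 1 < (F.sort (· ≤ ·)).length := by omega
  rw [List.getD_eq_getElem _ _ hlt]
  have h1 : (F.sort (· ≤ ·))[(F.sort (· ≤ ·)).length - 1] ≤ n :=
    hle _ ((Finset.mem_sort _).mp (List.getElem_mem hlt))
  obtain ⟨i, hi, hget⟩ := List.mem_iff_getElem.mp hnL
  have h2 : (F.sort (· ≤ ·))[i] ≤ (F.sort (· ≤ ·))[(F.sort (· ≤ ·)).length - 1] := by
    have hmono := List.Pairwise.rel_get_of_le (Finset.pairwise_sort F (· ≤ ·))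
      (a := ⟨i, hi⟩) (b := ⟨(F.sort (· ≤ ·)).length - 1, hlt⟩) (Fin.mk_le_mk.mpr (by omega))
    simpa using hmono
  rw [hget] at h2
  omega

end FinsetComp


namespace SSOT

lemma mult_zero (S : SSOT) : S.mult 0 = 0 := by simp [SSOT.mult]

lemma mult_eq_of_ne (S : SSOT) (i : ℕ) (hi : i ≠ 0) :
    S.mult i = ((S.A (i - 1)).card - (S.D i).card) + ((S.A i).card - (S.D i).card) := by
  simp [SSOT.mult, hi]

lemma cum_zero (S : SSOT) : S.cum 0 = 0 := by simp [SSOT.cum, SSOT.mult]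

lemma cum_succ (S : SSOT) (i : ℕ) : S.cum (i + 1) = S.cum i + S.mult (i + 1) := by
  simp [SSOT.cum, Finset.sum_range_succ]

lemma cum_mono (S : SSOT) {i j : ℕ} (h : i ≤ j) : S.cum i ≤ S.cum j := by
  induction j, h using Nat.le_induction with
  | base => exact le_refl _
  | succ j hj ih => rw [cum_succ]; omega

lemma length_eq_cum (S : SSOT) : S.length = S.cum S.steps := rfl

lemma comList_length (S : SSOT) : S.comList.length = S.steps := by simp [SSOT.comList]

lemma comList_getElem (S : SSOT) (i : ℕ) (h : i < S.comList.length) :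
    S.comList[i] = S.mult (i + 1) := by
  simp [SSOT.comList]

lemma comList_take_sum (S : SSOT) : ∀ i, i ≤ S.steps → (S.comList.take i).sum = S.cum i := by
  intro i
  induction i with
  | zero => intro _; simp [cum_zero]
  | succ i ih =>
    intro h
    have h1 : i < S.comList.length := by rw [comList_length]; omega
    rw [List.sum_take_succ _ _ h1, ih (by omega), cum_succ, comList_getElem _ _ h1]

lemma comList_sum (S : SSOT) : S.comList.sum = S.length := by
  have h := S.comList_take_sum S.steps (le_refl _)
  have h2 : S.comList.take S.steps = S.comList := by
    rw [← S.comList_length]; exact List.take_length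
  rw [h2] at h
  rw [h, length_eq_cum]

lemma delc_le (S : SSOT) (i : ℕ) (hi : 1 ≤ i) : S.delc i ≤ S.mult i := by
  rw [mult_eq_of_ne S i (by omega)]
  unfold SSOT.delc
  omega

end SSOT

lemma cum_of_descent (S : SSOT) (O : ℕ → YoungDiagram) (hstd : IsStd S O) {m : ℕ}
    (hm1 : 1 ≤ m) (hmn : m ≤ S.length) (hdes : IsDescent O m) :
    ∃ i, i ≤ S.steps ∧ S.cum i = m := by
  by_contra hcon
  push_neg at hcon
  obtain ⟨_, _, _, h4, h5, h6, h7⟩ := hstd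
  have hex : ∃ i, m ≤ S.cum i := ⟨S.steps, by rw [← S.length_eq_cum]; exact hmn⟩
  obtain ⟨i, hmcum, hik, hi1, hlow⟩ :
      ∃ i, m ≤ S.cum i ∧ i ≤ S.steps ∧ 1 ≤ i ∧ S.cum (i - 1) < m := by
    refine ⟨Nat.find hex, Nat.find_spec hex,
      Nat.find_le (by rw [← S.length_eq_cum]; exact hmn), ?_, ?_⟩
    · rcases Nat.eq_zero_or_pos (Nat.find hex) with h0 | h
      · exfalso
        have := Nat.find_spec hex
        rw [h0, S.cum_zero] at this
        omega
      · exact h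
    · by_contra hc
      have := Nat.find_min hex (m := Nat.find hex - 1) (by
        rcases Nat.eq_zero_or_pos (Nat.find hex) with h0 | h
        · exfalso
          have := Nat.find_spec hex
          rw [h0, S.cum_zero] at this
          omega
        · omega)
      omega
  have hmlt : m < S.cum i := lt_of_le_of_ne hmcum (fun h => hcon i hik h.symm)
  have hcsucc : S.cum i = S.cum (i - 1) + S.mult i := by
    obtain ⟨i', rfl⟩ : ∃ i', i = i' + 1 := ⟨i - 1, by omega⟩
    rw [S.cum_succ]
    simp
  have hdle : S.delc i ≤ S.mult i := S.delc_le i hi1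
  rcases Nat.lt_or_ge m (S.cum (i - 1) + S.delc i) with hcase | hcase
  · -- both moves deletions
    have hdm := h4 i m hi1 hlow (by omega)
    have hdm1 := h4 i (m + 1) hi1 (by omega) (by omega)
    rcases hdes with ⟨ha, _⟩ | ⟨ha, _, _⟩ | ⟨_, _, B, B', hb1, hb2, hb3, hb4, hb5⟩
    · exact not_isAdd_of_del hdm ha
    · exact not_isAdd_of_del hdm ha
    · exact hb5 (h6 i m hi1 hlow (by omega) B B' hb1 hb2 hb3 hb4)
  rcases Nat.lt_or_ge (S.cum (i - 1) + S.delc i) m with hcase2 | hcase2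
  · -- both moves additions
    have ham := h5 i m hi1 (by omega) (by omega)
    have ham1 := h5 i (m + 1) hi1 (by omega) (by omega)
    rcases hdes with ⟨_, hna1⟩ | ⟨_, _, B, B', hb1, hb2, hb3, hb4, hb5⟩ | ⟨hna, _, _⟩
    · exact hna1 ham1.1
    · exact hb5 (h7 i m hi1 (by omega) (by omega) B B' hb1 hb2 hb3 hb4)
    · exact hna ham.1
  · -- deletion then addition
    have hdm := h4 i m hi1 hlow (by omega)
    have ham1 := h5 i (m + 1) hi1 (by omega) (by omega)
    rcases hdes with ⟨ha, _⟩ | ⟨ha, _, _⟩ | ⟨_, hna1, _⟩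
    · exact not_isAdd_of_del hdm ha
    · exact not_isAdd_of_del hdm ha
    · exact hna1 ham1.1

lemma refines_dir (O : ℕ → YoungDiagram) (n : ℕ) (S : SSOT)
    (hlen : S.length = n) (hstd : IsStd S O) (hstrong : StrongComp S.comList) :
    Refines S.comList (desComp O n) := by
  rcases Nat.eq_zero_or_pos n with h0 | hn
  · subst h0
    have hnil : S.comList = [] :=
      strongcomp_nil_of_sum_eq_zero hstrong (by rw [S.comList_sum, hlen])
    rw [hnil, desComp, if_pos rfl]
    exact ⟨[], rfl, rfl⟩
  · have hdc : desComp O n = diffs ((DesSet O n ∪ {n}).sort (· ≤ ·)) := by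
      rw [desComp, if_neg (by omega)]
    have hmemF : ∀ m ∈ DesSet O n ∪ {n}, 1 ≤ m := by
      intro m hm
      rcases Finset.mem_union.mp hm with h | h
      · have := Finset.mem_Ico.mp (Finset.mem_filter.mp h).1
        omega
      · rw [Finset.mem_singleton.mp h]; omega
    have hleF : ∀ m ∈ DesSet O n ∪ {n}, m ≤ n := by
      intro m hm
      rcases Finset.mem_union.mp hm with h | h
      · have := Finset.mem_Ico.mp (Finset.mem_filter.mp h).1
        omega
      · rw [Finset.mem_singleton.mp h]
    have hnF : n ∈ DesSet O n ∪ {n} := Finset.mem_union_right _ (Finset.mem_singleton_self n)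
    rw [hdc]
    refine refines_of_psums _ _ hstrong (diffsF_strong hmemF) ?_ ?_
    · rw [S.comList_sum, hlen, diffsF_sum hmemF hnF hleF]
    · intro t ht
      rcases Nat.eq_zero_or_pos t with h0 | hpos
      · subst h0; exact ⟨0, by omega, by simp⟩
      have htL : t ≤ ((DesSet O n ∪ {n}).sort (· ≤ ·)).length := by
        rw [← diffsF_length (F := DesSet O n ∪ {n})]; exact ht
      have hmem := diffsF_take_sum_mem hmemF t hpos htL
      rcases Finset.mem_union.mp hmem with h | h
      · obtain ⟨hico, hdesc⟩ := Finset.mem_filter.mp h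
        have hico' := Finset.mem_Ico.mp hico
        obtain ⟨i, hik, hcum⟩ := cum_of_descent S O hstd (by omega)
          (by rw [hlen]; omega) hdesc
        refine ⟨i, by rw [S.comList_length]; exact hik, ?_⟩
        rw [S.comList_take_sum i hik, hcum]
      · rw [Finset.mem_singleton] at h
        refine ⟨S.steps, by rw [S.comList_length], ?_⟩
        rw [S.comList_take_sum S.steps (le_refl _), ← S.length_eq_cum, hlen, h]

lemma exists_ssot_zero (O : ℕ → YoungDiagram) (l : YoungDiagram) (hO : IsOT O 0 l) :
    ∃ S : SSOT, S.shape = l ∧ S.length = 0 ∧ IsStd S O ∧ S.comList = [] := by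
  obtain ⟨hO0, hOn, _⟩ := hO
  have hl : l = ⊥ := by rw [← hOn 0 (le_refl _), hO0]
  obtain ⟨S, hSsteps, hSA, hSD⟩ :
      ∃ S : SSOT, S.steps = 0 ∧ (∀ i, S.A i = ⊥) ∧ (∀ i, S.D i = ⊥) :=
    ⟨{ steps := 0, A := fun _ => ⊥, D := fun _ => ⊥,
       hA0 := rfl, hD0 := rfl, hD1 := rfl,
       stableA := fun _ _ => rfl, stableD := fun _ _ => rfl,
       strip_del := fun _ _ => hstrip_refl _,
       strip_add := fun _ _ => hstrip_refl _,
       minimal := fun h => absurd rfl h }, rfl, fun _ => rfl, fun _ => rfl⟩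
  have hmult : ∀ i, S.mult i = 0 := by
    intro i
    rcases Nat.eq_zero_or_pos i with h0 | h
    · rw [h0, S.mult_zero]
    · rw [S.mult_eq_of_ne i (by omega), hSA, hSA, hSD]
      simp
  have hcum : ∀ i, S.cum i = 0 := by
    intro i
    unfold SSOT.cum
    simp [hmult]
  have hdelc : ∀ i, S.delc i = 0 := by
    intro i
    unfold SSOT.delc
    rw [hSA, hSD]
    simp
  have hlen : S.length = 0 := by rw [S.length_eq_cum, hcum]
  have hshape : S.shape = l := by rw [SSOT.shape, hSA, hl]
  have hObot : ∀ j, O j = ⊥ := fun j => by rw [hOn j (by omega), hl]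
  refine ⟨S, hshape, hlen, ⟨?_, ?_, ?_, ?_, ?_, ?_, ?_⟩, ?_⟩
  · intro j _; rw [hObot j, hshape, hl]
  · intro i; rw [hcum, hObot 0, hSA]
  · intro i _; rw [hcum, hdelc, hObot 0, hSD]
  · intro i m _ h1 h2; rw [hcum, hdelc] at *; omega
  · intro i m _ h1 h2; rw [hcum, hdelc] at h1; rw [hcum] at h2; omega
  · intro i m _ h1 h2; rw [hcum, hdelc] at h2; rw [hcum] at h1; omega
  · intro i m _ h1 h2; rw [hcum, hdelc] at h1; rw [hcum] at h2; omega
  · rw [SSOT.comList, hSsteps]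
    rfl

lemma exists_ssot (O : ℕ → YoungDiagram) (n : ℕ) (l : YoungDiagram) (hO : IsOT O n l)
    (b : List ℕ) (hb : StrongComp b) (hn : 0 < n) (hsum : b.sum = n)
    (hdes : ∀ m, 1 ≤ m → m < n → IsDescent O m → ∃ t, t ≤ b.length ∧ (b.take t).sum = m) :
    ∃ S : SSOT, S.shape = l ∧ S.length = n ∧ IsStd S O ∧ S.comList = b := by
  obtain ⟨hO0, hOn, hOmove⟩ := hO
  set k := b.length with hk
  set c : ℕ → ℕ := fun t => (b.take t).sum with hc
  have hc0 : c 0 = 0 := by simp [hc]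
  have hck : c k = n := by
    have : c k = (b.take b.length).sum := rfl
    rw [this, List.take_length, hsum]
  have hcmono : ∀ t t', t ≤ t' → c t ≤ c t' := fun t t' h => take_sum_le b t t' h
  have hcstrict : ∀ t t', t < t' → t' ≤ k → c t < c t' :=
    fun t t' h h' => take_sum_lt b hb t t' h h'
  have hk1 : 1 ≤ k := by
    by_contra h
    have h0 : k = 0 := by omega
    rw [h0, hc0] at hck
    omega
  have hcn : ∀ t, c t ≤ n := by
    intro t
    rcases le_or_gt t k with h | h
    · rw [← hck]; exact hcmono t k h
    · have h2 : c t = (b.take t).sum := rfl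
      rw [h2, List.take_of_length_le (by omega), hsum]
  have hmove : ∀ m, 1 ≤ m → m ≤ n →
      YCovers (O (m-1)) (O m) ∨ YCovers (O m) (O (m-1)) := by
    intro m h1 h2
    have h3 := hOmove (m-1) (by omega)
    have he : m - 1 + 1 = m := by omega
    rw [he] at h3
    exact h3
  have hnotdes : ∀ i m, 1 ≤ i → i ≤ k → c (i-1) < m → m < c i → ¬ IsDescent O m := by
    intro i m hi1 hik hlow hhigh hdm
    have hmn : m < n := lt_of_lt_of_le hhigh (hcn i)
    obtain ⟨t, htk, hteq⟩ := hdes m (by omega) hmn hdm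
    have hteq' : c t = m := hteq
    rcases Nat.lt_or_ge t i with h | h
    · have := hcmono t (i-1) (by omega)
      omega
    · have := hcmono i t h
      omega
  have hPex : ∀ i : ℕ, ∃ d, d = c i - c (i-1) ∨
      ¬ YCovers (O (c (i-1) + d + 1)) (O (c (i-1) + d)) :=
    fun i => ⟨c i - c (i-1), Or.inl rfl⟩
  set p : ℕ → ℕ := fun i => c (i-1) + Nat.find (hPex i) with hp
  have hple : ∀ i, c (i-1) ≤ p i := fun i => Nat.le_add_right _ _
  have hple2 : ∀ i, p i ≤ c i := by
    intro i
    have h1 : Nat.find (hPex i) ≤ c i - c (i-1) := Nat.find_le (Or.inl rfl)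
    have h2 := hcmono (i-1) i (by omega)
    simp only [hp]
    omega
  have hdel : ∀ i m, c (i-1) < m → m ≤ p i → YCovers (O m) (O (m-1)) := by
    intro i m hlow hhigh
    have hfind : m - 1 - c (i-1) < Nat.find (hPex i) := by
      simp only [hp] at hhigh
      omega
    have hmin := Nat.find_min (hPex i) hfind
    push_neg at hmin
    obtain ⟨_, hcov⟩ := hmin
    have e1 : c (i-1) + (m - 1 - c (i-1)) + 1 = m := by omega
    have e2 : c (i-1) + (m - 1 - c (i-1)) = m - 1 := by omega
    rw [e1, e2] at hcov
    exact hcov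
  have hadd : ∀ i, 1 ≤ i → i ≤ k → ∀ m, p i < m → m ≤ c i → YCovers (O (m-1)) (O m) := by
    intro i hi1 hik m
    induction m using Nat.strong_induction_on with
    | _ m ih =>
      intro hlow hhigh
      have hm1 : 1 ≤ m := by have := hple i; omega
      have hmn : m ≤ n := le_trans hhigh (hcn i)
      rcases Nat.eq_or_lt_of_le (show p i + 1 ≤ m by omega) with he | hlt2
      · rcases Nat.find_spec (hPex i) with hsp | hsp
        · exfalso
          have h2 := hcmono (i-1) i (by omega)
          simp only [hp] at hlow hhigh
          omega
        · rcases hmove m hm1 hmn with h | h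
          · exact h
          · exfalso
            have e1 : c (i-1) + Nat.find (hPex i) + 1 = m := by
              simp only [hp] at he; omega
            have e2 : c (i-1) + Nat.find (hPex i) = m - 1 := by
              simp only [hp] at he; omega
            rw [e1, e2] at hsp
            exact hsp h
      · have hprev := ih (m-1) (by omega) (by omega) (by omega)
        rcases hmove m hm1 hmn with h | h
        · exact h
        · exfalso
          have hdesc : IsDescent O (m-1) := by
            refine Or.inl ⟨hprev.1, ?_⟩
            rw [show m - 1 + 1 = m from by omega]
            exact not_isAdd_of_del h
          exact hnotdes i (m-1) hi1 hik (by have := hple i; omega) (by omega) hdesc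
  have hne_del : ∀ i, 1 ≤ i → i ≤ k → ∀ m, c (i-1) < m → m + 1 ≤ p i →
      ∀ B B' : ℕ × ℕ, B ∈ O (m-1) → B ∉ O m → B' ∈ O m → B' ∉ O (m+1) → boxNE B' B := by
    intro i hi1 hik m hlow hhigh B B' h1 h2 h3 h4
    have hnd := hnotdes i m hi1 hik hlow (by have := hple2 i; omega)
    have hna1 : ¬ IsAdd O m := not_isAdd_of_del (hdel i m hlow (by omega))
    have hna2 : ¬ IsAdd O (m+1) := not_isAdd_of_del (hdel i (m+1) (by omega) hhigh)
    by_contra hbne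
    exact hnd (Or.inr (Or.inr ⟨hna1, hna2, B, B', h1, h2, h3, h4, hbne⟩))
  have hne_add : ∀ i, 1 ≤ i → i ≤ k → ∀ m, p i < m → m + 1 ≤ c i →
      ∀ B B' : ℕ × ℕ, B ∈ O m → B ∉ O (m-1) → B' ∈ O (m+1) → B' ∉ O m → boxNE B B' := by
    intro i hi1 hik m hlow hhigh B B' h1 h2 h3 h4
    have hnd := hnotdes i m hi1 hik (by have := hple i; omega) (by omega)
    have ha1 : IsAdd O m := (hadd i hi1 hik m hlow (by omega)).1
    have ha2 : IsAdd O (m+1) := (hadd i hi1 hik (m+1) (by omega) hhigh).1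
    by_contra hbne
    exact hnd (Or.inr (Or.inl ⟨ha1, ha2, B, B', h1, h2, h3, h4, hbne⟩))
  have hcard_p : ∀ i, (O (c (i-1))).card = (O (p i)).card + (p i - c (i-1)) :=
    fun i => card_del_run O (c (i-1)) (p i) (hple i) (fun m hm hm' => hdel i m hm hm')
  have hcard_c : ∀ i, 1 ≤ i → i ≤ k → (O (c i)).card = (O (p i)).card + (c i - p i) :=
    fun i h1 h2 => card_add_run O (p i) (c i) (hple2 i) (hadd i h1 h2)
  have hp1 : p 1 = 0 := by
    have hfind : Nat.find (hPex 1) = 0 := by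
      rw [Nat.find_eq_zero]
      right
      intro hcov
      have h2 := hcov.2
      rw [add_zero] at h2
      have e0 : c (1 - 1) = 0 := hc0
      rw [e0, hO0] at h2
      simp [YoungDiagram.card] at h2
    have : p 1 = c (1-1) + Nat.find (hPex 1) := rfl
    rw [this, hfind, add_zero]
    exact hc0
  obtain ⟨S, hSsteps, hSA, hSD⟩ :
      ∃ S : SSOT, S.steps = k ∧ (∀ i, S.A i = O (c (min i k))) ∧
        (∀ i, S.D i = if i = 0 then ⊥ else if i ≤ k then O (p i) else O (c k)) := by
    refine ⟨⟨k, fun i => O (c (min i k)),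
      fun i => if i = 0 then ⊥ else if i ≤ k then O (p i) else O (c k),
      ?_, ?_, ?_, ?_, ?_, ?_, ?_, ?_⟩, rfl, fun i => rfl, fun i => rfl⟩
    · show O (c (min 0 k)) = ⊥
      rw [Nat.zero_min, hc0, hO0]
    · show (if 0 = 0 then (⊥ : YoungDiagram) else _) = ⊥
      rw [if_pos rfl]
    · show (if 1 = 0 then (⊥ : YoungDiagram) else if 1 ≤ k then O (p 1) else O (c k)) = ⊥
      rw [if_neg one_ne_zero, if_pos hk1, hp1, hO0]
    · intro i hi
      show O (c (min i k)) = O (c (min k k))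
      rw [min_eq_right hi, min_self]
    · intro i hi
      show (if i = 0 then (⊥:YoungDiagram) else if i ≤ k then O (p i) else O (c k))
        = O (c (min k k))
      rw [if_neg (by omega), if_neg (by omega), min_self]
    · -- strip_del
      intro i hi1
      show HStrip (if i + 1 = 0 then (⊥:YoungDiagram) else if i + 1 ≤ k then O (p (i+1))
        else O (c k)) (O (c (min i k)))
      by_cases hik : i < k
      · rw [if_neg (by omega), if_pos (by omega : i + 1 ≤ k), min_eq_left (by omega)]
        refine hstrip_del_run O (c i) (p (i+1)) (hple (i+1)) (fun m hm hm' => hdel (i+1) m hm hm')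
          (fun m hm hm' B B' h1 h2 h3 h4 =>
            (hne_del (i+1) (by omega) (by omega) m hm hm' B B' h1 h2 h3 h4).2)
      · rw [if_neg (by omega), if_neg (by omega), min_eq_right (by omega)]
        exact hstrip_refl _
    · -- strip_add
      intro i hi2
      show HStrip (if i = 0 then (⊥:YoungDiagram) else if i ≤ k then O (p i) else O (c k))
        (O (c (min i k)))
      by_cases hik : i ≤ k
      · rw [if_neg (by omega), if_pos hik, min_eq_left hik]
        exact hstrip_add_run O (p i) (c i) (hple2 i) (hadd i (by omega) hik)
          (fun m hm hm' B B' h1 h2 h3 h4 =>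
            (hne_add i (by omega) hik m hm hm' B B' h1 h2 h3 h4).2)
      · rw [if_neg (by omega), if_neg hik, min_eq_right (by omega)]
        exact hstrip_refl _
    · -- minimal
      intro hk0 hcon
      obtain ⟨hda, haa⟩ := hcon
      rw [if_neg (by omega), if_pos (le_refl k), min_self] at hda
      rw [min_self, min_eq_left (by omega)] at haa
      have h1 := congrArg YoungDiagram.card hda
      have h2 := congrArg YoungDiagram.card haa
      have h3 := hcard_p k
      have h4 := hcard_c k (by omega) (le_refl k)
      have h5 := hcstrict (k-1) k (by omega) (le_refl k)
      have h6 := hple2 k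
      have h7 := hple k
      omega
  have hSAle : ∀ i, i ≤ k → S.A i = O (c i) := fun i h => by rw [hSA, min_eq_left h]
  have hSAge : ∀ i, k ≤ i → S.A i = O (c k) := fun i h => by rw [hSA, min_eq_right h]
  have hSDin : ∀ i, 1 ≤ i → i ≤ k → S.D i = O (p i) := fun i h1 h2 => by
    rw [hSD, if_neg (by omega), if_pos h2]
  have hSDout : ∀ i, k < i → S.D i = O (c k) := fun i h => by
    rw [hSD, if_neg (by omega), if_neg (by omega)]
  have hdelc : ∀ i, 1 ≤ i → i ≤ k → S.delc i = p i - c (i-1) := by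
    intro i h1 h2
    unfold SSOT.delc
    rw [hSAle (i-1) (by omega), hSDin i h1 h2]
    have := hcard_p i
    omega
  have hdelc0 : ∀ i, k < i → S.delc i = 0 := by
    intro i h
    unfold SSOT.delc
    rw [hSAge (i-1) (by omega), hSDout i h]
    omega
  have hmult : ∀ i, 1 ≤ i → i ≤ k → S.mult i = c i - c (i-1) := by
    intro i h1 h2
    rw [S.mult_eq_of_ne i (by omega), hSAle (i-1) (by omega), hSAle i h2, hSDin i h1 h2]
    have q1 := hcard_p i
    have q2 := hcard_c i h1 h2
    have q3 := hple i
    have q4 := hple2 i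
    omega
  have hmult0 : ∀ i, k < i → S.mult i = 0 := by
    intro i h
    rw [S.mult_eq_of_ne i (by omega), hSAge (i-1) (by omega), hSAge i (by omega), hSDout i h]
    omega
  have hcum : ∀ i, S.cum i = c (min i k) := by
    intro i
    induction i with
    | zero => rw [S.cum_zero, Nat.zero_min, hc0]
    | succ i ih =>
      rw [S.cum_succ, ih]
      by_cases h : i + 1 ≤ k
      · rw [min_eq_left h, min_eq_left (by omega), hmult (i+1) (by omega) h]
        simp only [Nat.add_sub_cancel]
        have := hcmono i (i+1) (by omega)
        omega
      · rw [min_eq_right (by omega), min_eq_right (by omega), hmult0 (i+1) (by omega)]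
        omega
  have hlen : S.length = n := by rw [S.length_eq_cum, hSsteps, hcum, min_self, hck]
  have hshape : S.shape = l := by
    rw [SSOT.shape, hSsteps, hSAge k (le_refl _), hck]
    exact hOn n (le_refl _)
  have hcomb : S.comList = b := by
    refine List.ext_getElem ?_ ?_
    · rw [S.comList_length, hSsteps]
    · intro t h1 h2
      rw [S.comList_getElem t h1]
      have htk : t < k := by rw [S.comList_length, hSsteps] at h1; exact h1
      rw [hmult (t+1) (by omega) (by omega)]
      simp only [Nat.add_sub_cancel]
      have h3 : c (t+1) = c t + b[t] := List.sum_take_succ b t h2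
      have h4 := hcmono t (t+1) (by omega)
      omega
  have hcumin : ∀ i, i ≤ k → S.cum i = c i := fun i h => by rw [hcum, min_eq_left h]
  have hcumout : ∀ i, k ≤ i → S.cum i = c k := fun i h => by rw [hcum, min_eq_right h]
  refine ⟨S, hshape, hlen, ⟨?_, ?_, ?_, ?_, ?_, ?_, ?_⟩, hcomb⟩
  · intro j hj
    rw [hlen] at hj
    rw [hshape]
    exact hOn j hj
  · intro i
    rw [hcum, hSA]
  · intro i hi1
    by_cases hik : i ≤ k
    · rw [hcumin (i-1) (by omega), hdelc i hi1 hik, hSDin i hi1 hik]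
      congr 1
      have := hple i
      omega
    · rw [hcumout (i-1) (by omega), hdelc0 i (by omega), hSDout i (by omega), add_zero]
  · intro i m hi1 h1 h2
    by_cases hik : i ≤ k
    · rw [hcumin (i-1) (by omega)] at h1 h2
      rw [hdelc i hi1 hik] at h2
      refine hdel i m h1 ?_
      have := hple i
      omega
    · rw [hcumout (i-1) (by omega)] at h1 h2
      rw [hdelc0 i (by omega)] at h2
      omega
  · intro i m hi1 h1 h2
    by_cases hik : i ≤ k
    · rw [hcumin (i-1) (by omega)] at h1
      rw [hdelc i hi1 hik] at h1
      rw [hcumin i hik] at h2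
      refine hadd i hi1 hik m ?_ h2
      have := hple i
      omega
    · rw [hcumout (i-1) (by omega)] at h1
      rw [hdelc0 i (by omega)] at h1
      rw [hcumout i (by omega)] at h2
      omega
  · intro i m hi1 h1 h2 B B' hb1 hb2 hb3 hb4
    by_cases hik : i ≤ k
    · rw [hcumin (i-1) (by omega)] at h1 h2
      rw [hdelc i hi1 hik] at h2
      refine hne_del i hi1 hik m h1 ?_ B B' hb1 hb2 hb3 hb4
      have := hple i
      omega
    · rw [hcumout (i-1) (by omega)] at h1 h2
      rw [hdelc0 i (by omega)] at h2
      omega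
  · intro i m hi1 h1 h2 B B' hb1 hb2 hb3 hb4
    by_cases hik : i ≤ k
    · rw [hcumin (i-1) (by omega)] at h1
      rw [hdelc i hi1 hik] at h1
      rw [hcumin i hik] at h2
      refine hne_add i hi1 hik m ?_ h2 B B' hb1 hb2 hb3 hb4
      have := hple i
      omega
    · rw [hcumout (i-1) (by omega)] at h1
      rw [hdelc0 i (by omega)] at h1
      rw [hcumout i (by omega)] at h2
      omega

end AuxProof

/-- For every oscillating tableau `O` of shape `λ` and length `n`, the set of strong
compositions lying in the image `com(SSOT(O))` equals `ref(des O)`, the set of strong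
compositions refining the descent composition of `O`. -/
theorem strong_comps_in_image_com (l : YoungDiagram) (n : ℕ) (O : ℕ → YoungDiagram)
    (hO : IsOT O n l) :
    {b : List ℕ | StrongComp b ∧
        ∃ S : SSOT, S.shape = l ∧ S.length = n ∧ IsStd S O ∧ S.comList = b}
      = {b : List ℕ | StrongComp b ∧ Refines b (desComp O n)} := by
  ext b
  simp only [Set.mem_setOf_eq]
  constructor
  · rintro ⟨hstrong, S, hsh, hlen, hstd, hcom⟩
    subst hcom
    exact ⟨hstrong, refines_dir O n S hlen hstd hstrong⟩
  · rintro ⟨hstrong, href⟩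
    refine ⟨hstrong, ?_⟩
    rcases Nat.eq_zero_or_pos n with h0 | hn
    · subst h0
      have hbnil : b = [] := by
        obtain ⟨L, hf, hm⟩ := href
        rw [desComp, if_pos rfl] at hm
        rw [← hf, List.map_eq_nil_iff.mp hm]
        rfl
      subst hbnil
      exact exists_ssot_zero O l hO
    · have hdc : desComp O n = diffs ((DesSet O n ∪ {n}).sort (· ≤ ·)) := by
        rw [desComp, if_neg (by omega)]
      have hmemF : ∀ m ∈ DesSet O n ∪ {n}, 1 ≤ m := by
        intro m hm
        rcases Finset.mem_union.mp hm with h | h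
        · have := Finset.mem_Ico.mp (Finset.mem_filter.mp h).1
          omega
        · rw [Finset.mem_singleton.mp h]; omega
      have hleF : ∀ m ∈ DesSet O n ∪ {n}, m ≤ n := by
        intro m hm
        rcases Finset.mem_union.mp hm with h | h
        · have := Finset.mem_Ico.mp (Finset.mem_filter.mp h).1
          omega
        · rw [Finset.mem_singleton.mp h]
      have hnF : n ∈ DesSet O n ∪ {n} :=
        Finset.mem_union_right _ (Finset.mem_singleton_self n)
      have hsum : b.sum = n := by
        rw [sum_eq_of_refines href, hdc, diffsF_sum hmemF hnF hleF]
      have hdes : ∀ m, 1 ≤ m → m < n → IsDescent O m →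
          ∃ t, t ≤ b.length ∧ (b.take t).sum = m := by
        intro m h1 h2 hd
        have hmF : m ∈ DesSet O n ∪ {n} := Finset.mem_union_left _
          (Finset.mem_filter.mpr ⟨Finset.mem_Ico.mpr ⟨h1, h2⟩, hd⟩)
        obtain ⟨t, ht1, ht2, ht3⟩ := mem_diffsF_take_sum hmemF hmF
        obtain ⟨j, hj1, hj2⟩ := psums_of_refines href t (by rw [hdc]; exact ht2)
        refine ⟨j, hj1, ?_⟩
        rw [← hj2, hdc]
        exact ht3
      exact exists_ssot O n l hO b hstrong hn hsum hdes
end
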